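/- arXiv:math/0502446 — 4 statements merged into one kernel-verified Lean document; each statement's English description precedes it below -/
import Mathlib

section
/- Let n ≥ 1 and let S be an n-element subset of {1, …, 2n} with complement Š; write S = {s_1 < … < s_n} and Š = {š_1 < … < š_n}, and set T := {max(s_1,š_1), …, max(s_n,š_n)}. Then every S-compatible non-crossing perfect matching on {1, …, 2n} is also T-compatible. -/
/-!
A point `x` lies in `T` iff, `x` being the `i`-th element of its own class (`S` or `Sᶜ`), at
least `i` elements of the other class are `≤ x`. For an edge `a < f a` of a non-crossing matching,
the points strictly between `a` and `f a` are matched among themselves, so `S`-compatibility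
splits them evenly between `S` and `Sᶜ`. Hence, going from `a` to `f a`, both counts grow by the
same amount, plus one for the class of `f a`; since `a` and `f a` lie in different classes this
flips the comparison, so exactly one endpoint of the edge lies in `T`.
-/

open Finset

namespace Finset

variable {α : Type*} [LinearOrder α] {k : ℕ}

theorem card_filter_le_orderIsoOfFin (s : Finset α) (h : s.card = k) (i : Fin k) :
    #{y ∈ s | y ≤ (s.orderIsoOfFin h i : α)} = i + 1 := by
  rw [← Fin.card_Iic i]
  symm
  refine card_bij (fun j _ => (s.orderIsoOfFin h j : α)) (fun j hj => ?_)
    (fun j _ j' _ hjj' => (s.orderIsoOfFin h).injective (Subtype.ext hjj')) (fun y hy => ?_)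
  · exact mem_filter.2 ⟨(s.orderIsoOfFin h j).2, (s.orderIsoOfFin h).monotone (mem_Iic.1 hj)⟩
  · obtain ⟨hys, hyi⟩ := mem_filter.1 hy
    refine ⟨(s.orderIsoOfFin h).symm ⟨y, hys⟩, mem_Iic.2 ?_, by simp⟩
    rw [OrderIso.symm_apply_le]
    exact hyi

theorem orderIsoOfFin_le_iff (s : Finset α) (h : s.card = k) (i : Fin k) (x : α) :
    (s.orderIsoOfFin h i : α) ≤ x ↔ i + 1 ≤ #{y ∈ s | y ≤ x} := by
  rw [← card_filter_le_orderIsoOfFin s h i]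
  constructor
  · intro hix
    exact card_le_card (monotone_filter_right s fun y _ hy => hy.trans hix)
  · intro hcard
    by_contra! hxi
    have hsub : {y ∈ s | y ≤ x} ⊂ {y ∈ s | y ≤ (s.orderIsoOfFin h i : α)} :=
      ssubset_iff_of_subset (monotone_filter_right s fun y _ hy => hy.trans hxi.le) |>.2
        ⟨_, mem_filter.2 ⟨(s.orderIsoOfFin h i).2, le_rfl⟩, by simpa using hxi⟩
    exact (card_lt_card hsub).not_ge hcard

theorem exists_max_orderIsoOfFin_eq_iff {A B : Finset α} (hA : A.card = k) (hB : B.card = k)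
    {x : α} (hxA : x ∈ A) (hxB : x ∉ B) :
    (∃ i, max (A.orderIsoOfFin hA i : α) (B.orderIsoOfFin hB i) = x) ↔
      #{y ∈ A | y ≤ x} ≤ #{y ∈ B | y ≤ x} := by
  set i₀ := (A.orderIsoOfFin hA).symm ⟨x, hxA⟩
  have hi₀ : (A.orderIsoOfFin hA i₀ : α) = x := by simp [i₀]
  rw [← hi₀, card_filter_le_orderIsoOfFin, ← orderIsoOfFin_le_iff, hi₀]
  constructor
  · rintro ⟨i, hi⟩
    have hBi : (B.orderIsoOfFin hB i : α) ≠ x := fun h => hxB (h ▸ (B.orderIsoOfFin hB i).2)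
    have hAi : (A.orderIsoOfFin hA i : α) = x :=
      ((max_choice _ _).resolve_right fun h => hBi (h.symm.trans hi)).symm.trans hi
    obtain rfl : i = i₀ := (A.orderIsoOfFin hA).injective (Subtype.ext (hAi.trans hi₀.symm))
    exact hi ▸ le_max_right _ _
  · intro hle
    exact ⟨i₀, by rw [max_eq_left (hi₀ ▸ hle), hi₀]⟩

def pairedMax [Fintype α] [DecidableEq α] (S : Finset α) (hS : S.card = k) (hSc : Sᶜ.card = k) :
    Finset α :=
  image (fun i => max (S.orderIsoOfFin hS i : α) (Sᶜ.orderIsoOfFin hSc i)) univ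

theorem mem_pairedMax_iff [Fintype α] [DecidableEq α] {S : Finset α}
    (hS : S.card = k) (hSc : Sᶜ.card = k) (x : α) :
    x ∈ S.pairedMax hS hSc ↔
      if x ∈ S then #{y ∈ S | y ≤ x} ≤ #{y ∈ Sᶜ | y ≤ x}
      else #{y ∈ Sᶜ | y ≤ x} ≤ #{y ∈ S | y ≤ x} := by
  simp only [pairedMax, mem_image, mem_univ, true_and]
  split_ifs with hx
  · exact exists_max_orderIsoOfFin_eq_iff hS hSc hx (notMem_compl.2 hx)
  · simp only [max_comm (S.orderIsoOfFin hS _ : α)]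
    exact exists_max_orderIsoOfFin_eq_iff hSc hS (mem_compl.2 hx) hx

theorem card_filter_le_eq_add (s : Finset α) {a b : α} (hab : a < b) :
    #{y ∈ s | y ≤ b} = #{y ∈ s | y ≤ a} + #{y ∈ s | a < y ∧ y < b} + if b ∈ s then 1 else 0 := by
  rw [← card_singleton b, ← card_empty (α := α), ← apply_ite card, ← filter_eq']
  simp only [card_filter, ← sum_add_distrib]
  exact sum_congr rfl fun y _ => by grind

end Finset

section Matching

variable {α : Type*} {f : α → α}

theorem card_filter_eq_card_filter_compl_of_involutive [Fintype α] [DecidableEq α]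
    {S : Finset α} {p : α → Prop} [DecidablePred p] (hf : Function.Involutive f)
    (hswap : ∀ a, a ∈ S ↔ f a ∉ S) (hp : ∀ x, p x → p (f x)) :
    #{y ∈ S | p y} = #{y ∈ Sᶜ | p y} := by
  refine card_nbij' f f (fun y hy => ?_) (fun y hy => ?_) (fun y _ => hf y) (fun y _ => hf y)
  · simp only [coe_filter, Set.mem_ofPred_eq, mem_compl] at hy ⊢
    exact ⟨(hswap y).1 hy.1, hp y hy.2⟩
  · simp only [coe_filter, Set.mem_ofPred_eq, mem_compl] at hy ⊢
    exact ⟨by rw [hswap, hf]; exact hy.1, hp y hy.2⟩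

variable [LinearOrder α]

theorem apply_mem_Ioo_of_noncrossing (hf : Function.Involutive f)
    (hnoncross : ¬ ∃ a b, a < b ∧ b < f a ∧ f a < f b) {a x : α} (hx : x ∈ Set.Ioo a (f a)) :
    f x ∈ Set.Ioo a (f a) := by
  push Not at hnoncross
  obtain ⟨hax, hxa⟩ := hx
  have hfx_ne_a : f x ≠ a := fun h => hxa.ne (by rw [← h, hf])
  have hfx_ne_fa : f x ≠ f a := fun h => hax.ne' (hf.injective h)
  refine ⟨(not_lt.1 fun hlt => ?_).lt_of_ne' hfx_ne_a,
    (hnoncross a x hax hxa).lt_of_ne hfx_ne_fa⟩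
  have := hnoncross (f x) a hlt (by rwa [hf])
  rw [hf] at this
  exact this.not_gt hxa

theorem mem_pairedMax_iff_apply_notMem_of_lt [Fintype α] [DecidableEq α] {k : ℕ}
    {S : Finset α} (hS : S.card = k) (hSc : Sᶜ.card = k) (hf : Function.Involutive f)
    (hnoncross : ¬ ∃ a b, a < b ∧ b < f a ∧ f a < f b) (hswap : ∀ a, a ∈ S ↔ f a ∉ S)
    {a : α} (ha : a < f a) :
    a ∈ S.pairedMax hS hSc ↔ f a ∉ S.pairedMax hS hSc := by
  have hmid : #{y ∈ S | a < y ∧ y < f a} = #{y ∈ Sᶜ | a < y ∧ y < f a} :=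
    card_filter_eq_card_filter_compl_of_involutive hf hswap fun _ hx =>
      apply_mem_Ioo_of_noncrossing hf hnoncross hx
  have hS_split := card_filter_le_eq_add S ha
  have hSc_split := card_filter_le_eq_add Sᶜ ha
  rw [mem_pairedMax_iff, mem_pairedMax_iff]
  by_cases haS : a ∈ S
  · have hfa : f a ∉ S := (hswap a).1 haS
    rw [if_neg hfa] at hS_split
    rw [if_pos (mem_compl.2 hfa)] at hSc_split
    rw [if_pos haS, if_neg hfa]
    omega
  · have hfa : f a ∈ S := not_not.1 (mt (hswap a).2 haS)
    rw [if_pos hfa] at hS_split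
    rw [if_neg (notMem_compl.2 hfa)] at hSc_split
    rw [if_neg haS, if_pos hfa]
    omega

end Matching

theorem noncrossing_S_compatible_is_T_compatible_general (n : ℕ)
    (S : Finset (Fin (2 * n))) (hS : S.card = n) (hSc : Sᶜ.card = n)
    (T : Finset (Fin (2 * n)))
    (hT : T = Finset.image (fun i : Fin n =>
      max ((S.orderIsoOfFin hS i : Fin (2 * n)))
        ((Sᶜ.orderIsoOfFin hSc i : Fin (2 * n)))) Finset.univ)
    (f : Fin (2 * n) → Fin (2 * n))
    (hinvol : ∀ a, f (f a) = a) (hfree : ∀ a, f a ≠ a)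
    (hnoncross : ¬ ∃ a b, a < b ∧ b < f a ∧ f a < f b)
    (hScompat : ∀ a, a ∈ S ↔ f a ∉ S) :
    ∀ a, a ∈ T ↔ f a ∉ T := by
  change T = S.pairedMax hS hSc at hT
  subst hT
  intro a
  rcases (hfree a).lt_or_gt with h | h
  · have := mem_pairedMax_iff_apply_notMem_of_lt hS hSc hinvol hnoncross hScompat
      (show f a < f (f a) by rwa [hinvol])
    rw [hinvol] at this
    exact Iff.not_right this.symm
  · exact mem_pairedMax_iff_apply_notMem_of_lt hS hSc hinvol hnoncross hScompat h

/-- Let `S` be an `n`-element subset of `{1, …, 2n}` with complement `Š`, with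
increasing enumerations `S = {s_1 < … < s_n}`, `Š = {š_1 < … < š_n}`, and let
`T := {max(s_1,š_1), …, max(s_n,š_n)}`. Then every `S`-compatible non-crossing
perfect matching on `{1, …, 2n}` is also `T`-compatible. The matching is
encoded by a fixed-point-free involution `f`, whose edges are the pairs
`{a, f a}`; non-crossing means there are no edges `{a,c}`, `{b,d}` with
`a < b < c < d`; `S`-compatibility means every edge has exactly one endpoint
in `S`. -/
theorem noncrossing_S_compatible_is_T_compatible (n : ℕ) (hn : 1 ≤ n)
    (S : Finset (Fin (2 * n))) (hS : S.card = n) (hSc : Sᶜ.card = n)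
    (T : Finset (Fin (2 * n)))
    (hT : T = Finset.image (fun i : Fin n =>
      max ((S.orderIsoOfFin hS i : Fin (2 * n)))
        ((Sᶜ.orderIsoOfFin hSc i : Fin (2 * n)))) Finset.univ)
    (f : Fin (2 * n) → Fin (2 * n))
    (hinvol : ∀ a, f (f a) = a) (hfree : ∀ a, f a ≠ a)
    (hnoncross : ¬ ∃ a b, a < b ∧ b < f a ∧ f a < f b)
    (hScompat : ∀ a, a ∈ S ↔ f a ∉ S) :
    ∀ a, a ∈ T ↔ f a ∉ T :=
  noncrossing_S_compatible_is_T_compatible_general n S hS hSc T hT f hinvol hfree hnoncross hScompat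
end

section
/- For any two partitions λ and μ, the conjugate of ⌈(λ+μ)/2⌉ equals sort₁(λ', μ'), and the conjugate of ⌊(λ+μ)/2⌋ equals sort₂(λ', μ'). -/
/-- The conjugate partition: `λ'_j = #{i : λ_i ≥ j}` (0-indexed:
`conjPart λ j = #{i : λ_i ≥ j + 1}`). -/
noncomputable def conjPart (lam : ℕ → ℕ) : ℕ → ℕ :=
  fun j => Set.ncard {i : ℕ | j + 1 ≤ lam i}

lemma setOf_finite {f : ℕ → ℕ} {B : ℕ} (hB : ∀ j, B ≤ j → f j = 0) (c : ℕ) :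
    {i : ℕ | c + 1 ≤ f i}.Finite := by
  apply (Set.finite_Iio B).subset
  intro j hj
  simp only [Set.mem_setOf_eq] at hj
  simp only [Set.mem_Iio]
  by_contra h
  push_neg at h
  rw [hB j h] at hj
  omega

lemma lt_conjPart_iff {f : ℕ → ℕ} (hf : Antitone f) {B : ℕ}
    (hB : ∀ j, B ≤ j → f j = 0) (c i : ℕ) :
    c + 1 ≤ f i ↔ i < conjPart f c := by
  constructor
  · intro h
    have hsub : Set.Iic i ⊆ {k : ℕ | c + 1 ≤ f k} := fun k hk =>
      le_trans h (hf hk)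
    have h2 := Set.ncard_le_ncard hsub (setOf_finite hB c)
    rw [show Set.Iic i = ↑(Finset.Iic i) from (Finset.coe_Iic i).symm,
      Set.ncard_coe_finset, Nat.card_Iic] at h2
    show i < Set.ncard {i : ℕ | c + 1 ≤ f i}
    omega
  · intro h
    by_contra hc
    push_neg at hc
    have hsub : {k : ℕ | c + 1 ≤ f k} ⊆ Set.Iio i := by
      intro k hk
      simp only [Set.mem_setOf_eq] at hk
      simp only [Set.mem_Iio]
      by_contra h2
      push_neg at h2
      exact absurd (le_trans hk (hf h2)) (by omega)
    have h3 := Set.ncard_le_ncard hsub (Set.finite_Iio i)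
    rw [show Set.Iio i = ↑(Finset.range i) from (Finset.coe_range i).symm,
      Set.ncard_coe_finset, Finset.card_range] at h3
    have : i < Set.ncard {i : ℕ | c + 1 ≤ f i} := h
    omega

lemma conjPart_eq_zero {f : ℕ → ℕ} (hf : Antitone f) {j : ℕ} (hj : f 0 ≤ j) :
    conjPart f j = 0 := by
  unfold conjPart
  convert Set.ncard_empty ℕ
  ext i
  simp only [Set.mem_setOf_eq, Set.mem_empty_iff_false, iff_false]
  have := hf (Nat.zero_le i)
  omega

lemma conjPart_conjPart {f : ℕ → ℕ} (hf : Antitone f) {B : ℕ}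
    (hB : ∀ j, B ≤ j → f j = 0) (t : ℕ) :
    conjPart (conjPart f) t = f t := by
  show Set.ncard {j : ℕ | t + 1 ≤ conjPart f j} = f t
  have hset : {j : ℕ | t + 1 ≤ conjPart f j} = Set.Iio (f t) := by
    ext j
    simp only [Set.mem_setOf_eq, Set.mem_Iio]
    constructor
    · intro h
      have := (lt_conjPart_iff hf hB j t).mpr (by omega)
      omega
    · intro h
      have := (lt_conjPart_iff hf hB j t).mp (by omega)
      omega
  rw [hset, show Set.Iio (f t) = ↑(Finset.range (f t)) from (Finset.coe_range _).symm,
    Set.ncard_coe_finset, Finset.card_range]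

lemma card_filter_eq_conjPart {f : ℕ → ℕ} {n : ℕ} (h : ∀ j, n ≤ j → f j = 0) (t : ℕ) :
    ((Finset.range n).filter (fun m => t + 1 ≤ f m)).card = conjPart f t := by
  unfold conjPart
  rw [← Set.ncard_coe_finset]
  congr 1
  ext m
  simp only [Finset.coe_filter, Set.mem_setOf_eq, Finset.mem_range]
  constructor
  · rintro ⟨_, h2⟩; exact h2
  · intro h2
    refine ⟨?_, h2⟩
    by_contra hc
    push_neg at hc
    rw [h m hc] at h2
    omega

lemma filter_split (s : Finset ℕ) (f : ℕ → ℕ) (v : ℕ) :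
    (s.filter (fun a => v ≤ f a)).card
      = (s.filter (fun a => v = f a)).card + (s.filter (fun a => v + 1 ≤ f a)).card := by
  have h1 : s.filter (fun a => v ≤ f a)
      = s.filter (fun a => v = f a) ∪ s.filter (fun a => v + 1 ≤ f a) := by
    rw [Finset.filter_union_right]
    apply Finset.filter_congr
    intro x _
    constructor
    · intro h; omega
    · intro h; omega
  rw [h1, Finset.card_union_of_disjoint]
  rw [Finset.disjoint_filter]
  intro x _ hx
  omega

lemma count_map_range_zero {f : ℕ → ℕ} {n : ℕ} (h : ∀ j, n ≤ j → f j = 0) :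
    Multiset.count 0 (Multiset.map f (Finset.range n).val) = n - conjPart f 0 := by
  rw [Multiset.count_map]
  have key : Multiset.card (Multiset.filter (fun a => 0 = f a) (Finset.range n).val)
      = ((Finset.range n).filter (fun a => 0 = f a)).card := rfl
  rw [key]
  have hs := filter_split (Finset.range n) f 0
  have h0 : ((Finset.range n).filter (fun a => 0 ≤ f a)).card = n := by
    rw [Finset.filter_true_of_mem (fun x _ => Nat.zero_le _), Finset.card_range]
  have h1 : ((Finset.range n).filter (fun a => 0 + 1 ≤ f a)).card = conjPart f 0 :=
    card_filter_eq_conjPart h 0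
  omega

lemma count_map_range_succ {f : ℕ → ℕ} {n : ℕ} (h : ∀ j, n ≤ j → f j = 0) (w : ℕ) :
    Multiset.count (w + 1) (Multiset.map f (Finset.range n).val)
      = conjPart f w - conjPart f (w + 1) := by
  rw [Multiset.count_map]
  have key : Multiset.card (Multiset.filter (fun a => w + 1 = f a) (Finset.range n).val)
      = ((Finset.range n).filter (fun a => w + 1 = f a)).card := rfl
  rw [key]
  have hs := filter_split (Finset.range n) f (w + 1)
  have h1 : ((Finset.range n).filter (fun a => w + 1 ≤ f a)).card = conjPart f w :=
    card_filter_eq_conjPart h w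
  have h2 : ((Finset.range n).filter (fun a => w + 1 + 1 ≤ f a)).card = conjPart f (w + 1) :=
    card_filter_eq_conjPart h (w + 1)
  omega

/-- For partitions `λ, μ`, the conjugate of `⌈(λ+μ)/2⌉` equals `sort₁(λ',μ')`
and the conjugate of `⌊(λ+μ)/2⌋` equals `sort₂(λ',μ')`. Here `σ` is the weakly
decreasing rearrangement of all parts of `λ'` and `μ'` together (the
conjugates `λ'`, `μ'` have at most `K` parts each), so that
`sort₁(λ',μ') = (σ_1, σ_3, σ_5, …)` and `sort₂(λ',μ') = (σ_2, σ_4, σ_6, …)`,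
and all floors/ceilings are coordinatewise. -/
theorem conj_half_sum_eq_sort (lam mu : ℕ → ℕ)
    (hlam : Antitone lam) (hmu : Antitone mu)
    (B : ℕ) (hlamB : ∀ j, B ≤ j → lam j = 0) (hmuB : ∀ j, B ≤ j → mu j = 0)
    (K : ℕ) (hlamK : lam 0 ≤ K) (hmuK : mu 0 ≤ K)
    (sigma : ℕ → ℕ) (hsigma : Antitone sigma)
    (hsigmaK : ∀ j, 2 * K ≤ j → sigma j = 0)
    (hunion : (Finset.range (2 * K)).val.map sigma
      = (Finset.range K).val.map (conjPart lam) + (Finset.range K).val.map (conjPart mu)) :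
    ∀ j, conjPart (fun i => (lam i + mu i + 1) / 2) j = sigma (2 * j)
      ∧ conjPart (fun i => (lam i + mu i) / 2) j = sigma (2 * j + 1) := by
  set s : ℕ → ℕ := fun i => lam i + mu i with hs
  have hs_anti : Antitone s := fun a b hab => Nat.add_le_add (hlam hab) (hmu hab)
  have hsB : ∀ j, B ≤ j → s j = 0 := fun j hj => by simp [hs, hlamB j hj, hmuB j hj]
  set tau : ℕ → ℕ := conjPart s with htau
  have htau_zero : ∀ j, 2 * K ≤ j → tau j = 0 := fun j hj =>
    conjPart_eq_zero hs_anti (by simp only [hs]; omega)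
  have hlam'_zero : ∀ j, K ≤ j → conjPart lam j = 0 := fun j hj =>
    conjPart_eq_zero hlam (by omega)
  have hmu'_zero : ∀ j, K ≤ j → conjPart mu j = 0 := fun j hj =>
    conjPart_eq_zero hmu (by omega)
  -- multiset identity
  have hms : (Finset.range (2 * K)).val.map tau
      = (Finset.range K).val.map (conjPart lam) + (Finset.range K).val.map (conjPart mu) := by
    ext v
    rw [Multiset.count_add]
    have dtau : ∀ t, conjPart tau t = s t := conjPart_conjPart hs_anti hsB
    have dlam : ∀ t, conjPart (conjPart lam) t = lam t := conjPart_conjPart hlam hlamB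
    have dmu : ∀ t, conjPart (conjPart mu) t = mu t := conjPart_conjPart hmu hmuB
    rcases Nat.eq_zero_or_pos v with hv | hv
    · subst hv
      rw [count_map_range_zero htau_zero, count_map_range_zero hlam'_zero,
        count_map_range_zero hmu'_zero, dtau, dlam, dmu]
      have : s 0 = lam 0 + mu 0 := rfl
      omega
    · obtain ⟨w, rfl⟩ : ∃ w, v = w + 1 := ⟨v - 1, by omega⟩
      rw [count_map_range_succ htau_zero, count_map_range_succ hlam'_zero,
        count_map_range_succ hmu'_zero, dtau, dtau, dlam, dlam, dmu, dmu]
      have h1 : lam (w + 1) ≤ lam w := hlam (by omega)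
      have h2 : mu (w + 1) ≤ mu w := hmu (by omega)
      have h3 : s w = lam w + mu w := rfl
      have h4 : s (w + 1) = lam (w + 1) + mu (w + 1) := rfl
      omega
  have hperm : (List.map sigma (List.range (2 * K))).Perm
      (List.map tau (List.range (2 * K))) := by
    rw [← Multiset.coe_eq_coe]
    have e1 : ((List.map sigma (List.range (2 * K)) : List ℕ) : Multiset ℕ)
        = (Finset.range (2 * K)).val.map sigma := rfl
    have e2 : ((List.map tau (List.range (2 * K)) : List ℕ) : Multiset ℕ)
        = (Finset.range (2 * K)).val.map tau := rfl
    rw [e1, e2, hunion, hms]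
  have htau_anti : Antitone tau := by
    intro a b hab
    apply Set.ncard_le_ncard _ (setOf_finite hsB a)
    intro i hi
    simp only [Set.mem_setOf_eq] at *
    omega
  have hsorted : ∀ g : ℕ → ℕ, Antitone g →
      (List.map g (List.range (2 * K))).Pairwise (· ≥ ·) := by
    intro g hg
    rw [List.pairwise_map]
    exact (List.pairwise_lt_range (n := 2 * K)).imp (fun hab => hg (le_of_lt hab))
  have heq : List.map sigma (List.range (2 * K)) = List.map tau (List.range (2 * K)) :=
    List.Perm.eq_of_pairwise' (hsorted sigma hsigma) (hsorted tau htau_anti) hperm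
  have hlt : ∀ m, m < 2 * K → sigma m = tau m := by
    intro m hm
    have := List.map_eq_map_iff.mp heq
    exact this m (List.mem_range.mpr hm)
  have hall : ∀ m, sigma m = tau m := by
    intro m
    rcases Nat.lt_or_ge m (2 * K) with h | h
    · exact hlt m h
    · rw [hsigmaK m h, htau_zero m h]
  intro j
  constructor
  · rw [hall (2 * j)]
    show Set.ncard {i : ℕ | j + 1 ≤ (lam i + mu i + 1) / 2}
      = Set.ncard {i : ℕ | 2 * j + 1 ≤ s i}
    congr 1
    ext i
    simp only [Set.mem_setOf_eq, hs]
    omega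
  · rw [hall (2 * j + 1)]
    show Set.ncard {i : ℕ | j + 1 ≤ (lam i + mu i) / 2}
      = Set.ncard {i : ℕ | 2 * j + 1 + 1 ≤ s i}
    congr 1
    ext i
    simp only [Set.mem_setOf_eq, hs]
    omega
end

section
/- Let I, J be k-element subsets of {1, …, n} with complements Ī = {1,…,n}\I and J̄ = {1,…,n}\J, let X = (x_{ij}) be an n×n matrix of independent commuting variables, and let v be a permutation of {1, …, n}. Then the coefficient of the monomial x_{1,v(1)} x_{2,v(2)} ⋯ x_{n,v(n)} in the polynomial Δ_{I,J}(X)·Δ_{Ī,J̄}(X) equals (−1)^{inv_v(I) + inv_v(Ī)} if v(I) = J, and equals 0 if v(I) ≠ J, where inv_v(K) denotes the number of pairs i < j with both i, j ∈ K and v(i) > v(j). -/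
/-!
Each minor of the generic matrix is an alternating sum of monomials `∏ x_{r,c}`, and
`Δ_{I,J}` only involves rows in `I` while `Δ_{Ī,J̄}` only involves rows in `Ī`. Hence the
coefficient of `x_{1,v(1)} ⋯ x_{n,v(n)}` in the product is the product of the coefficient of
`∏_{r ∈ I} x_{r,v(r)}` in `Δ_{I,J}` and that of `∏_{r ∈ Ī} x_{r,v(r)}` in `Δ_{Ī,J̄}`. The first
monomial occurs in `Δ_{I,J}` only if `v` maps `I` onto `J`, and then exactly once, namely for
the permutation of `{1, …, k}` that `v` induces through the increasing enumerations of `I` and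
`J`; since these enumerations are monotone, its inversions are the inversions of `v` inside `I`.
-/

/-- The minor `Δ_{I,J}(X)` of an `n×n` matrix with row set `I` and column set
`J` (both of cardinality `k`, rows and columns taken in increasing order). -/
noncomputable def minorIJ {R : Type*} [CommRing R] (n k : ℕ)
    (X : Matrix (Fin n) (Fin n) R) (I J : Finset (Fin n))
    (hI : I.card = k) (hJ : J.card = k) : R :=
  Matrix.det (Matrix.of fun a b : Fin k =>
    X (I.orderIsoOfFin hI a) (J.orderIsoOfFin hJ b))

/-- `inv_v(K)`: the number of pairs `i < j` with `i, j ∈ K` and `v(i) > v(j)`. -/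
def invOn (n : ℕ) (v : Equiv.Perm (Fin n)) (K : Finset (Fin n)) : ℕ :=
  (Finset.univ.filter fun p : Fin n × Fin n =>
    p.1 < p.2 ∧ p.1 ∈ K ∧ p.2 ∈ K ∧ v p.2 < v p.1).card

open Finset MvPolynomial Function Equiv

namespace Equiv.Perm

def numInversions {m : ℕ} (σ : Perm (Fin m)) : ℕ :=
  #{p : Fin m × Fin m | p.1 < p.2 ∧ σ p.2 < σ p.1}

theorem sign_eq_signAux {m : ℕ} (σ : Perm (Fin m)) : sign σ = signAux σ := by
  induction σ using swap_induction_on with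
  | one => simp
  | swap_mul f x y hxy ih =>
    rw [signAux_mul, signAux_swap hxy, map_mul, sign_swap hxy, ih]

theorem sign_eq_neg_one_pow_numInversions {m : ℕ} (σ : Perm (Fin m)) :
    sign σ = (-1) ^ σ.numInversions := by
  rw [sign_eq_signAux, signAux, prod_ite, prod_const, prod_const, one_pow, mul_one,
    numInversions]
  congr 1
  -- `signAux` counts the pairs `⟨a, b⟩` with `b < a` and `σ a ≤ σ b`.
  refine card_nbij' (fun x => (x.2, x.1)) (fun p => ⟨p.2, p.1⟩) ?_ ?_ (fun _ _ => rfl)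
    (fun _ _ => rfl)
  · rintro ⟨a, b⟩ hx
    simp only [coe_filter, mem_finPairsLT, mem_univ, true_and, Set.mem_ofPred_eq] at hx ⊢
    exact ⟨hx.1, hx.2.lt_of_ne fun h => hx.1.ne' (σ.injective h)⟩
  · rintro ⟨a, b⟩ hp
    simp only [coe_filter, mem_univ, true_and, mem_finPairsLT, Set.mem_ofPred_eq] at hp ⊢
    exact ⟨hp.1, hp.2.le⟩

end Equiv.Perm

namespace Finsupp

section Graph

variable {ι α β : Type*} [DecidableEq α] [DecidableEq β]

theorem sum_single_pair_apply [Fintype ι] {r : ι → α} (hr : Injective r) (g : ι → β) (i : ι)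
    (b : β) : (∑ j, single (r j, g j) (1 : ℕ)) (r i, b) = if g i = b then 1 else 0 := by
  rw [Finset.sum_apply', Finset.sum_eq_single i]
  · simp [single_apply]
  · intro j _ hji
    simp [hr.eq_iff, hji]
  · simp

theorem sum_single_pair_eq_iff [Fintype ι] {r : ι → α} (hr : Injective r) {g h : ι → β} :
    ∑ i, single (r i, g i) 1 = ∑ i, single (r i, h i) (1 : ℕ) ↔ ∀ i, g i = h i := by
  refine ⟨fun H i => ?_, fun H => by simp only [H]⟩
  simpa [sum_single_pair_apply hr] using DFunLike.congr_fun H (r i, h i)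

theorem support_sum_single_pair_subset (K : Finset α) (f : α → β) :
    ((∑ r ∈ K, single (r, f r) 1).support : Set (α × β)) ⊆ Prod.fst ⁻¹' K := by
  intro x hx
  obtain ⟨r, hr, hxr⟩ := mem_biUnion.1 (support_finsetSum hx)
  rw [mem_singleton.1 (support_single_subset hxr)]
  exact hr

end Graph

theorem eq_of_add_eq_add_of_support_subset {σ M : Type*} [AddCancelCommMonoid M]
    {s : Set σ} {a b c d : σ →₀ M} (h : a + b = c + d) (ha : ↑a.support ⊆ s)
    (hc : ↑c.support ⊆ s) (hb : ↑b.support ⊆ sᶜ) (hd : ↑d.support ⊆ sᶜ) : a = c ∧ b = d := by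
  have hac : a = c := by
    ext x
    have hx := DFunLike.congr_fun h x
    simp only [add_apply] at hx
    by_cases hxs : x ∈ s
    · rwa [notMem_support_iff.1 fun hx' => hb hx' hxs,
        notMem_support_iff.1 fun hx' => hd hx' hxs, add_zero, add_zero] at hx
    · rw [notMem_support_iff.1 fun hx' => hxs (ha hx'),
        notMem_support_iff.1 fun hx' => hxs (hc hx')]
  subst hac
  exact ⟨rfl, add_left_cancel h⟩

end Finsupp

theorem Matrix.det_mem_of_forall_mem {ι A S : Type*} [Fintype ι] [DecidableEq ι] [CommRing A]
    [SetLike S A] [SubringClass S A] {s : S} {M : Matrix ι ι A} (hM : ∀ i j, M i j ∈ s) :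
    M.det ∈ s := by
  rw [Matrix.det_apply']
  exact sum_mem fun σ _ => mul_mem (intCast_mem s _) (prod_mem fun i _ => hM _ _)

namespace MvPolynomial

variable {R σ : Type*}

theorem support_subset_of_mem_supported [CommSemiring R] {s : Set σ} {p : MvPolynomial σ R}
    (hp : p ∈ supported R s) {c : σ →₀ ℕ} (hc : c ∈ p.support) : ↑c.support ⊆ s :=
  fun x hx => mem_supported.1 hp ((mem_vars_iff_mem_support x).2 ⟨c, hc, hx⟩)

theorem coeff_add_mul_of_mem_supported [CommSemiring R] {s : Set σ} {p q : MvPolynomial σ R}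
    (hp : p ∈ supported R s) (hq : q ∈ supported R sᶜ) {a b : σ →₀ ℕ} (ha : ↑a.support ⊆ s)
    (hb : ↑b.support ⊆ sᶜ) : coeff (a + b) (p * q) = coeff a p * coeff b q := by
  classical
  rw [coeff_mul, sum_eq_single (a, b) _ fun hab => absurd (mem_antidiagonal.2 rfl) hab]
  rintro ⟨c, d⟩ hcd hne
  by_contra hpq
  obtain ⟨rfl, rfl⟩ := Finsupp.eq_of_add_eq_add_of_support_subset (mem_antidiagonal.1 hcd)
    (support_subset_of_mem_supported hp (mem_support_iff.2 (left_ne_zero_of_mul hpq))) ha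
    (support_subset_of_mem_supported hq (mem_support_iff.2 (right_ne_zero_of_mul hpq))) hb
  exact hne rfl

variable {ι α β : Type*} [CommRing R] [Fintype ι] [DecidableEq ι]

theorem det_of_X_eq_sum_monomial (r : ι → α) (c : ι → β) :
    (Matrix.of fun i j => (X (r i, c j) : MvPolynomial (α × β) R)).det
      = ∑ τ : Perm ι, ((Perm.sign τ : ℤ) : MvPolynomial (α × β) R)
          * monomial (∑ i, Finsupp.single (r i, c (τ i)) 1) 1 := by
  rw [← Matrix.det_transpose, Matrix.det_apply']
  simp only [Matrix.transpose_apply, Matrix.of_apply, monomial_sum_one]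
  rfl

theorem coeff_det_of_X [DecidableEq α] [DecidableEq β] {r : ι → α} (hr : Injective r)
    (c : ι → β) (f : α → β) :
    coeff (∑ i, Finsupp.single (r i, f (r i)) 1)
        (Matrix.of fun i j => (X (r i, c j) : MvPolynomial (α × β) R)).det
      = ∑ τ : Perm ι, if ∀ i, c (τ i) = f (r i) then ((Perm.sign τ : ℤ) : R) else 0 := by
  rw [det_of_X_eq_sum_monomial, coeff_sum]
  refine sum_congr rfl fun τ _ => ?_
  rw [← map_intCast (C : R →+* MvPolynomial (α × β) R), coeff_C_mul, coeff_monomial,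
    mul_ite, mul_one, mul_zero]
  exact if_congr (Finsupp.sum_single_pair_eq_iff hr) rfl rfl

end MvPolynomial

namespace Finset

theorem image_compl_eq_compl_iff {α : Type*} [Fintype α] [DecidableEq α] (v : Perm α)
    {K L : Finset α} : Kᶜ.image v = Lᶜ ↔ K.image v = L := by
  have hcompl : Kᶜ.image v = (K.image v)ᶜ := by
    simpa [← coe_inj] using v.image_compl (K : Set α)
  rw [hcompl, compl_inj_iff]

section PermOfImageEq

variable {α : Type*} [LinearOrder α] {m : ℕ} {K L : Finset α}

noncomputable def permOfImageEq (hK : #K = m) (hL : #L = m) (v : Perm α)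
    (hv : K.image v = L) : Perm (Fin m) :=
  (K.orderIsoOfFin hK).toEquiv.trans <|
    (v.subtypeEquiv fun x => by rw [← hv, v.injective.mem_finset_image]).trans
      (L.orderIsoOfFin hL).symm.toEquiv

variable (hK : #K = m) (hL : #L = m) {v : Perm α}

theorem orderIsoOfFin_permOfImageEq (hv : K.image v = L) (i : Fin m) :
    (L.orderIsoOfFin hL (permOfImageEq hK hL v hv i) : α) = v (K.orderIsoOfFin hK i) := by
  simp [permOfImageEq]

theorem forall_orderIsoOfFin_eq_iff (hv : K.image v = L) {τ : Perm (Fin m)} :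
    (∀ i, (L.orderIsoOfFin hL (τ i) : α) = v (K.orderIsoOfFin hK i))
      ↔ τ = permOfImageEq hK hL v hv := by
  simp only [← orderIsoOfFin_permOfImageEq hK hL hv, Subtype.val_inj,
    (L.orderIsoOfFin hL).injective.eq_iff, Equiv.ext_iff]

theorem image_eq_of_forall_orderIsoOfFin_eq {τ : Perm (Fin m)}
    (h : ∀ i, (L.orderIsoOfFin hL (τ i) : α) = v (K.orderIsoOfFin hK i)) : K.image v = L := by
  refine eq_of_subset_of_card_le (fun y hy => ?_)
    (by rw [card_image_of_injective _ v.injective, hK, hL])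
  obtain ⟨x, hx, rfl⟩ := mem_image.1 hy
  obtain ⟨i, hi⟩ := (K.orderIsoOfFin hK).surjective ⟨x, hx⟩
  rw [show x = K.orderIsoOfFin hK i by rw [hi], ← h i]
  exact coe_mem _

end PermOfImageEq

theorem numInversions_permOfImageEq {n m : ℕ} {K L : Finset (Fin n)} (hK : #K = m)
    (hL : #L = m) (v : Perm (Fin n)) (hv : K.image v = L) :
    (permOfImageEq hK hL v hv).numInversions = invOn n v K := by
  set e := K.orderIsoOfFin hK
  set ρ := permOfImageEq hK hL v hv
  have hlt : ∀ a b, e a < e b ↔ a < b := fun a b => e.lt_iff_lt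
  have hρ : ∀ a b, ρ b < ρ a ↔ v (e b) < v (e a) := fun a b => by
    rw [← (L.orderIsoOfFin hL).lt_iff_lt, ← Subtype.coe_lt_coe, orderIsoOfFin_permOfImageEq,
      orderIsoOfFin_permOfImageEq]
  refine card_nbij (fun p => ((e p.1 : Fin n), (e p.2 : Fin n))) ?_ ?_ ?_
  · rintro ⟨a, b⟩ hab
    simp only [coe_filter, mem_univ, true_and, Set.mem_ofPred_eq] at hab ⊢
    exact ⟨(hlt a b).2 hab.1, (e a).2, (e b).2, (hρ a b).1 hab.2⟩
  · rintro ⟨a, b⟩ _ ⟨c, d⟩ _ h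
    simpa [Prod.ext_iff, e.injective.eq_iff] using h
  · rintro ⟨x, y⟩ hxy
    simp only [coe_filter, mem_univ, true_and, Set.mem_ofPred_eq] at hxy
    obtain ⟨hxy, hx, hy, hvyx⟩ := hxy
    refine ⟨(e.symm ⟨x, hx⟩, e.symm ⟨y, hy⟩), ?_, by simp⟩
    simp only [coe_filter, mem_univ, true_and, Set.mem_ofPred_eq, hρ]
    simp only [← hlt, OrderIso.apply_symm_apply]
    exact ⟨hxy, hvyx⟩

end Finset

section Minors

variable {R : Type*} [CommRing R] {n m : ℕ} {K L : Finset (Fin n)} (hK : #K = m) (hL : #L = m)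

theorem minorIJ_X_mem_supported :
    minorIJ n m (Matrix.of fun i j : Fin n => (X (i, j) : MvPolynomial (Fin n × Fin n) R))
      K L hK hL ∈ supported R (Prod.fst ⁻¹' K) :=
  Matrix.det_mem_of_forall_mem fun a _ =>
    Algebra.subset_adjoin ⟨_, (K.orderIsoOfFin hK a).2, rfl⟩

theorem coeff_minorIJ_X (v : Perm (Fin n)) :
    coeff (∑ r ∈ K, Finsupp.single (r, v r) 1)
        (minorIJ n m (Matrix.of fun i j : Fin n => (X (i, j) : MvPolynomial (Fin n × Fin n) R))
          K L hK hL)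
      = if K.image v = L then (-1) ^ invOn n v K else 0 := by
  have hsum : ∑ r ∈ K, Finsupp.single (r, v r) 1
      = ∑ i, Finsupp.single ((K.orderIsoOfFin hK i : Fin n), v (K.orderIsoOfFin hK i)) 1 := by
    rw [← sum_coe_sort K]
    exact ((K.orderIsoOfFin hK).toEquiv.sum_comp fun x => Finsupp.single ((x : Fin n), v x) 1).symm
  rw [hsum, minorIJ]
  simp only [Matrix.of_apply]
  rw [coeff_det_of_X (r := fun i => (K.orderIsoOfFin hK i : Fin n))
    (c := fun j => (L.orderIsoOfFin hL j : Fin n))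
    (Subtype.val_injective.comp (K.orderIsoOfFin hK).injective)]
  split_ifs with hv
  · simp only [forall_orderIsoOfFin_eq_iff hK hL hv, sum_ite_eq', mem_univ, if_true,
      Perm.sign_eq_neg_one_pow_numInversions, numInversions_permOfImageEq]
    simp
  · exact sum_eq_zero fun τ _ => if_neg fun h => hv (image_eq_of_forall_orderIsoOfFin_eq hK hL h)

end Minors

/-- Let `I, J` be `k`-element subsets of `{1,…,n}`, let `X = (x_{ij})` be the
`n×n` matrix of independent variables and `v` a permutation. The coefficient of
`x_{1,v(1)} ⋯ x_{n,v(n)}` in `Δ_{I,J}(X) Δ_{Ī,J̄}(X)` equals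
`(-1)^{inv_v(I) + inv_v(Ī)}` if `v(I) = J` and `0` otherwise. -/
theorem coeff_product_of_complementary_minors (n k : ℕ)
    (I J : Finset (Fin n)) (hI : I.card = k) (hJ : J.card = k)
    (v : Equiv.Perm (Fin n)) :
    MvPolynomial.coeff (∑ i : Fin n, Finsupp.single (i, v i) 1)
      (minorIJ n k (Matrix.of fun i j : Fin n => MvPolynomial.X (R := ℤ) (i, j)) I J hI hJ
        * minorIJ n (n - k) (Matrix.of fun i j : Fin n => MvPolynomial.X (R := ℤ) (i, j))
            Iᶜ Jᶜ
            (by simp [Finset.card_compl, hI])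
            (by simp [Finset.card_compl, hJ]))
      = if Finset.image v I = J then (-1) ^ (invOn n v I + invOn n v Iᶜ) else 0 := by
  have hcompl : (Prod.fst ⁻¹' ↑Iᶜ : Set (Fin n × Fin n)) = (Prod.fst ⁻¹' I)ᶜ := by
    rw [coe_compl, Set.preimage_compl]
  rw [← sum_add_sum_compl I, coeff_add_mul_of_mem_supported (minorIJ_X_mem_supported hI hJ)
    (hcompl ▸ minorIJ_X_mem_supported _ _) (Finsupp.support_sum_single_pair_subset I v)
    (hcompl ▸ Finsupp.support_sum_single_pair_subset Iᶜ v), coeff_minorIJ_X, coeff_minorIJ_X]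
  simp only [image_compl_eq_compl_iff, ite_zero_mul_ite_zero, and_self, pow_add]
end

section
/- Let w = (w_1, …, w_l) be a finite sequence of integers and let P be a set of positions. If w' is the sequence obtained from w by rearranging the subsequence of entries in positions P into weakly decreasing order (leaving all other entries fixed), then ainv(w') ≤ ainv(w), where ainv counts the pairs i < j with w_i < w_j; moreover the inequality is strict if the subsequence of w on positions P is not already weakly decreasing. -/
/-- The anti-inversion number of a finite integer sequence:
`ainv(w) = #{(i,j) : i < j and w_i < w_j}`. -/
def ainv (l : ℕ) (w : Fin l → ℤ) : ℕ :=
  (Finset.univ.filter fun p : Fin l × Fin l => p.1 < p.2 ∧ w p.1 < w p.2).card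

private lemma map_eq_on_of_map_eq {α β : Type*} {f g : α → β} :
    ∀ {L : List α}, L.map f = L.map g → ∀ x ∈ L, f x = g x := by
  intro L
  induction L with
  | nil => intro _ x hx; cases hx
  | cons a L ih =>
      intro h x hx
      simp only [List.map_cons, List.cons.injEq] at h
      rcases List.mem_cons.mp hx with rfl | hx
      · exact h.1
      · exact ih h.2 x hx

/-- Swapping an anti-inversion pair strictly decreases `ainv`. -/
private lemma ainv_swap_lt (l : ℕ) (w : Fin l → ℤ) (i j : Fin l)
    (hij : i < j) (hw : w i < w j) :
    ainv l (w ∘ Equiv.swap i j) < ainv l w := by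
  classical
  set σ := Equiv.swap i j with hσdef
  have hσi : σ i = j := Equiv.swap_apply_left i j
  have hσj : σ j = i := Equiv.swap_apply_right i j
  have hσk : ∀ k, k ≠ i → k ≠ j → σ k = k := fun k h1 h2 =>
    Equiv.swap_apply_of_ne_of_ne h1 h2
  have hσσ : ∀ k, σ (σ k) = k := fun k => Equiv.swap_apply_self i j k
  set S : Finset (Fin l × Fin l) :=
    Finset.univ.filter (fun p => p.1 < p.2 ∧ w p.1 < w p.2) with hS
  set S' : Finset (Fin l × Fin l) :=
    Finset.univ.filter (fun p => p.1 < p.2 ∧ (w ∘ σ) p.1 < (w ∘ σ) p.2) with hS'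
  have hij_mem : (i, j) ∈ S := by
    simp only [hS, Finset.mem_filter, Finset.mem_univ, true_and]
    exact ⟨hij, hw⟩
  have hmain : S'.card ≤ (S.erase (i, j)).card := by
    apply Finset.card_le_card_of_injOn
      (fun p => if σ p.1 < σ p.2 then (σ p.1, σ p.2) else p)
    · rintro ⟨p, q⟩ hm
      simp only [hS', Finset.mem_filter, Finset.mem_univ, true_and,
        Function.comp_apply, Finset.mem_coe] at hm
      obtain ⟨hpq, hval⟩ := hm
      by_cases hb : σ p < σ q
      · simp only [hb, if_true]
        refine Finset.mem_erase.mpr ⟨?_, ?_⟩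
        · intro hc
          have h1 : σ p = i := congrArg Prod.fst hc
          have h2 : σ q = j := congrArg Prod.snd hc
          have hp' : p = j := by rw [← hσσ p, h1, hσi]
          have hq' : q = i := by rw [← hσσ q, h2, hσj]
          rw [hp', hq'] at hpq
          exact absurd hij (lt_asymm hpq)
        · simp only [hS, Finset.mem_filter, Finset.mem_univ, true_and]
          exact ⟨hb, hval⟩
      · simp only [hb, if_false]
        have hne : σ q < σ p := by
          rcases lt_or_eq_of_le (not_lt.mp hb) with h | h
          · exact h
          · exact absurd (σ.injective h) (ne_of_lt hpq).symm
        by_cases hpi : p = i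
        · by_cases hqj : q = j
          · rw [hpi, hqj, hσi, hσj] at hval
            exact absurd hw (lt_asymm hval)
          · have hiq : i < q := by rw [← hpi]; exact hpq
            have hq : σ q = q := hσk q (ne_of_gt hiq) hqj
            rw [hpi, hσi, hq] at hval
            refine Finset.mem_erase.mpr ⟨?_, ?_⟩
            · intro hc; exact hqj (congrArg Prod.snd hc)
            · simp only [hS, Finset.mem_filter, Finset.mem_univ, true_and]
              refine ⟨hpq, ?_⟩
              rw [hpi]; exact lt_trans hw hval
        · by_cases hqj : q = j
          · have hpj : p ≠ j := by
              intro h; rw [h, hqj] at hpq; exact lt_irrefl j hpq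
            have hp : σ p = p := hσk p hpi hpj
            rw [hp, hqj, hσj] at hval
            refine Finset.mem_erase.mpr ⟨?_, ?_⟩
            · intro hc; exact hpi (congrArg Prod.fst hc)
            · simp only [hS, Finset.mem_filter, Finset.mem_univ, true_and]
              refine ⟨hpq, ?_⟩
              rw [hqj]; exact lt_trans hval hw
          · -- p ≠ i, q ≠ j : derive contradiction from σ q < σ p
            exfalso
            by_cases hpj : p = j
            · have hjq : j < q := by rw [← hpj]; exact hpq
              have hqi : q ≠ i := ne_of_gt (lt_trans hij hjq)
              have hq : σ q = q := hσk q hqi hqj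
              rw [hpj, hσj, hq] at hne
              exact absurd (lt_trans hne (lt_trans hij hjq)) (lt_irrefl q)
            · by_cases hqi : q = i
              · have hpi2 : p < i := by rw [← hqi]; exact hpq
                have hpj2 : p ≠ j := ne_of_lt (lt_trans hpi2 hij)
                have hp : σ p = p := hσk p hpi hpj2
                rw [hp, hqi, hσi] at hne
                exact absurd (lt_trans hne (lt_trans hpi2 hij)) (lt_irrefl j)
              · rw [hσk p hpi hpj, hσk q hqi hqj] at hne
                exact absurd hpq (lt_asymm hne)
    · rintro ⟨p, q⟩ hp ⟨r, s⟩ hr heq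
      simp only [hS', Finset.coe_filter, Set.mem_setOf_eq, Finset.mem_univ,
        true_and, Function.comp_apply] at hp hr
      by_cases h1 : σ p < σ q <;> by_cases h2 : σ r < σ s <;>
        simp only [h1, h2, if_true, if_false] at heq
      · have e1 : p = r := σ.injective (congrArg Prod.fst heq)
        have e2 : q = s := σ.injective (congrArg Prod.snd heq)
        rw [e1, e2]
      · exfalso
        have e1 : r = σ p := (congrArg Prod.fst heq).symm
        have e2 : s = σ q := (congrArg Prod.snd heq).symm
        rw [e1, e2, hσσ, hσσ] at h2
        exact h2 hp.1
      · exfalso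
        have e1 : p = σ r := congrArg Prod.fst heq
        have e2 : q = σ s := congrArg Prod.snd heq
        rw [e1, e2, hσσ, hσσ] at h1
        exact h1 hr.1
      · exact heq
  have h2 : (S.erase (i, j)).card < S.card := Finset.card_erase_lt_of_mem hij_mem
  exact lt_of_le_of_lt hmain h2

private lemma ainv_aux (l : ℕ) (w' : Fin l → ℤ) (P : Finset (Fin l))
    (hsorted : ∀ i ∈ P, ∀ j ∈ P, i ≤ j → w' j ≤ w' i) :
    ∀ (n : ℕ) (w : Fin l → ℤ), ainv l w ≤ n →
      (∀ i, i ∉ P → w' i = w i) → P.val.map w' = P.val.map w →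
      ainv l w' ≤ ainv l w
        ∧ ((∃ i ∈ P, ∃ j ∈ P, i < j ∧ w i < w j) → ainv l w' < ainv l w) := by
  classical
  intro n
  induction n using Nat.strong_induction_on with
  | _ n ih =>
    intro w hn houtside hmultiset
    by_cases hex : ∃ i ∈ P, ∃ j ∈ P, i < j ∧ w i < w j
    · obtain ⟨i, hiP, j, hjP, hij, hw⟩ := hex
      set σ := Equiv.swap i j with hσdef
      set w'' : Fin l → ℤ := w ∘ σ with hw''
      have hlt : ainv l w'' < ainv l w := ainv_swap_lt l w i j hij hw
      have hσmem : ∀ k ∈ P, σ k ∈ P := by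
        intro k hk
        by_cases h1 : k = i
        · rw [h1, Equiv.swap_apply_left]; exact hjP
        · by_cases h2 : k = j
          · rw [h2, Equiv.swap_apply_right]; exact hiP
          · rw [Equiv.swap_apply_of_ne_of_ne h1 h2]; exact hk
      have houtside'' : ∀ k, k ∉ P → w' k = w'' k := by
        intro k hk
        have h1 : k ≠ i := fun h => hk (h ▸ hiP)
        have h2 : k ≠ j := fun h => hk (h ▸ hjP)
        have : w'' k = w k := by
          simp only [hw'', Function.comp_apply, hσdef, Equiv.swap_apply_of_ne_of_ne h1 h2]
        rw [this]; exact houtside k hk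
      have himg : Finset.image σ P = P := by
        ext a
        simp only [Finset.mem_image]
        constructor
        · rintro ⟨b, hb, rfl⟩; exact hσmem b hb
        · intro ha
          exact ⟨σ a, hσmem a ha, Equiv.swap_apply_self i j a⟩
      have hPσ : P.val.map ⇑σ = P.val := by
        have := Finset.image_val_of_injOn (f := ⇑σ) (s := P) (σ.injective.injOn)
        rw [himg] at this
        exact this.symm
      have hmap'' : P.val.map w'' = P.val.map w := by
        calc P.val.map w'' = (P.val.map ⇑σ).map w := by
              rw [Multiset.map_map]
          _ = P.val.map w := by rw [hPσ]
      have hmultiset'' : P.val.map w' = P.val.map w'' := by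
        rw [hmultiset, hmap'']
      have hres := ih (ainv l w'') (lt_of_lt_of_le hlt hn) w'' le_rfl houtside'' hmultiset''
      constructor
      · exact le_of_lt (lt_of_le_of_lt hres.1 hlt)
      · intro _; exact lt_of_le_of_lt hres.1 hlt
    · -- w is already sorted decreasingly on P, hence w' = w on P
      push_neg at hex
      have hws : ∀ i ∈ P, ∀ j ∈ P, i ≤ j → w j ≤ w i := by
        intro i hi j hj hle
        rcases lt_or_eq_of_le hle with h | h
        · exact hex i hi j hj h
        · rw [h]
      have heqP : ∀ x ∈ P, w' x = w x := by
        set ps := P.sort (· ≤ ·) with hps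
        have hmem : ∀ x, x ∈ ps ↔ x ∈ P := fun x => Finset.mem_sort _
        have hsort : List.Pairwise (· ≤ ·) ps := Finset.pairwise_sort _ _
        have h1 : List.Pairwise (· ≥ ·) (ps.map w') := by
          rw [List.pairwise_map]
          exact hsort.imp_of_mem (fun {a b} ha hb hab =>
            hsorted a ((hmem a).mp ha) b ((hmem b).mp hb) hab)
        have h2 : List.Pairwise (· ≥ ·) (ps.map w) := by
          rw [List.pairwise_map]
          exact hsort.imp_of_mem (fun {a b} ha hb hab =>
            hws a ((hmem a).mp ha) b ((hmem b).mp hb) hab)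
        have hperm : (ps.map w').Perm (ps.map w) := by
          rw [← Multiset.coe_eq_coe, ← Multiset.map_coe, ← Multiset.map_coe,
            Finset.sort_eq]
          exact hmultiset
        haveI : IsAntisymm ℤ (· ≥ ·) := ⟨fun a b h1 h2 => le_antisymm h2 h1⟩
        have hlist : ps.map w' = ps.map w :=
          List.Perm.eq_of_pairwise' h1 h2 hperm
        intro x hx
        exact map_eq_on_of_map_eq hlist x ((hmem x).mpr hx)
      have hfun : w' = w := by
        funext x
        by_cases hx : x ∈ P
        · exact heqP x hx
        · exact houtside x hx
      rw [hfun]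
      refine ⟨le_rfl, ?_⟩
      rintro ⟨i, hi, j, hj, hij, hwlt⟩
      exact absurd hwlt (not_lt.mpr (hex i hi j hj hij))

/-- Let `w` be a finite integer sequence and `P` a set of positions. If `w'` is
obtained from `w` by rearranging the entries in positions `P` into weakly
decreasing order (leaving all other entries fixed), then `ainv(w') ≤ ainv(w)`;
moreover the inequality is strict if the subsequence of `w` on positions `P`
is not already weakly decreasing. -/
theorem ainv_le_of_sort_subsequence (l : ℕ) (w w' : Fin l → ℤ) (P : Finset (Fin l))
    (houtside : ∀ i, i ∉ P → w' i = w i)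
    (hmultiset : P.val.map w' = P.val.map w)
    (hsorted : ∀ i ∈ P, ∀ j ∈ P, i ≤ j → w' j ≤ w' i) :
    ainv l w' ≤ ainv l w
      ∧ ((∃ i ∈ P, ∃ j ∈ P, i < j ∧ w i < w j) → ainv l w' < ainv l w) := by
  exact ainv_aux l w' P hsorted (ainv l w) w le_rfl houtside hmultiset
end
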